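/- Let 1 ≤ p < ∞, let L ⊂ ℝ^d be a lattice, let R > 0, and let A ≥ 0 be an integer. If the total number of lattice vectors y ∈ L with ‖y‖_p ≤ R (including the zero vector) is at most 2A + 1, then every nonzero lattice vector has ℓ_p norm strictly greater than R/(A+1); that is, λ₁^{(p)}(L) > R/(A+1). -/

import Mathlib

open Real BigOperators

/-- The ℓ_p "norm" (for a real exponent `p`) of a vector in `ℝ^d`. -/
noncomputable def lpNorm (p : ℝ) {d : ℕ} (x : Fin d → ℝ) : ℝ :=
  (∑ i, |x i| ^ p) ^ (1 / p)

/-- The lattice generated by the vectors `B 0, …, B (m-1)`: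
the set of all integer linear combinations of the `B i`. -/
def latticeOf {d m : ℕ} (B : Fin m → Fin d → ℝ) : Set (Fin d → ℝ) :=
  {y | ∃ c : Fin m → ℤ, y = ∑ i, c i • B i}

/-!
If `0 ≠ y ∈ L` had `‖y‖_p ≤ R/(A+1)`, the multiples `k • y` with `|k| ≤ A + 1` would be
`2A + 3` distinct lattice vectors of norm at most `R`. The count is meaningful because a lattice
meets every bounded set in a finite set: extending the basis of `L` to a basis of `ℝ^d` puts `L`
inside a full-rank lattice, which is discrete.
-/

section LpNorm

variable {p : ℝ} {d : ℕ}

lemma lpNorm_nonneg (p : ℝ) (x : Fin d → ℝ) : 0 ≤ lpNorm p x := by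
  unfold lpNorm
  positivity

lemma lpNorm_smul (hp : 0 < p) (c : ℝ) (x : Fin d → ℝ) :
    lpNorm p (c • x) = |c| * lpNorm p x := by
  have hterm : ∀ i, |(c • x) i| ^ p = |c| ^ p * |x i| ^ p := fun i => by
    rw [Pi.smul_apply, smul_eq_mul, abs_mul, mul_rpow (abs_nonneg _) (abs_nonneg _)]
  unfold lpNorm
  rw [Finset.sum_congr rfl fun i _ => hterm i, ← Finset.mul_sum,
    mul_rpow (by positivity) (by positivity), ← rpow_mul (abs_nonneg _),
    mul_one_div_cancel hp.ne', rpow_one]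

lemma lpNorm_zsmul (hp : 0 < p) (k : ℤ) (x : Fin d → ℝ) :
    lpNorm p (k • x) = |(k : ℝ)| * lpNorm p x := by
  rw [← Int.cast_smul_eq_zsmul ℝ, lpNorm_smul hp]

lemma abs_apply_le_lpNorm (hp : 0 < p) (x : Fin d → ℝ) (i : Fin d) : |x i| ≤ lpNorm p x := by
  calc |x i| = (|x i| ^ p) ^ (1 / p) := by rw [one_div, rpow_rpow_inv (abs_nonneg _) hp.ne']
    _ ≤ lpNorm p x :=
      rpow_le_rpow (by positivity)
        (Finset.single_le_sum (f := fun j => |x j| ^ p) (fun j _ => by positivity)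
          (Finset.mem_univ i)) (by positivity)

lemma norm_le_lpNorm (hp : 0 < p) (x : Fin d → ℝ) : ‖x‖ ≤ lpNorm p x :=
  (pi_norm_le_iff_of_nonneg (lpNorm_nonneg p x)).mpr fun i => abs_apply_le_lpNorm hp x i

lemma isBounded_setOf_lpNorm_le (hp : 0 < p) (R : ℝ) :
    Bornology.IsBounded {x : Fin d → ℝ | lpNorm p x ≤ R} :=
  (Metric.isBounded_closedBall (x := 0) (r := R)).subset fun x hx =>
    mem_closedBall_zero_iff.mpr ((norm_le_lpNorm hp x).trans hx)

end LpNorm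

lemma LinearIndependent.finite_inter_span_int {E ι : Type*} [NormedAddCommGroup E]
    [NormedSpace ℝ E] [FiniteDimensional ℝ E] {B : ι → E} (hB : LinearIndependent ℝ B)
    {s : Set E} (hs : Bornology.IsBounded s) :
    (s ∩ Submodule.span ℤ (Set.range B)).Finite := by
  have hBr := hB.linearIndepOn_id
  let b := Module.Basis.extend hBr
  have hrange : Set.range B ⊆ Set.range b := by
    rw [Module.Basis.range_extend]
    exact hBr.subset_extend _
  exact (ZSpan.setFinite_inter b hs).subset
    (Set.inter_subset_inter_right s (Submodule.span_mono hrange))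

section Lattice

variable {d m : ℕ} (B : Fin m → Fin d → ℝ)

lemma latticeOf_eq_span : latticeOf B = Submodule.span ℤ (Set.range B) := by
  ext y
  rw [SetLike.mem_coe, Submodule.mem_span_range_iff_exists_fun]
  exact exists_congr fun c => eq_comm

lemma zsmul_mem_latticeOf {y : Fin d → ℝ} (hy : y ∈ latticeOf B) (k : ℤ) :
    k • y ∈ latticeOf B := by
  rw [latticeOf_eq_span] at hy ⊢
  exact zsmul_mem hy k

lemma finite_setOf_mem_latticeOf_lpNorm_le {p : ℝ} (hp : 0 < p) {B : Fin m → Fin d → ℝ}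
    (hB : LinearIndependent ℝ B) (R : ℝ) :
    {y | y ∈ latticeOf B ∧ lpNorm p y ≤ R}.Finite := by
  rw [Set.ofPred_and, Set.inter_comm, latticeOf_eq_span]
  exact hB.finite_inter_span_int (isBounded_setOf_lpNorm_le hp R)

end Lattice

lemma ncard_image_zsmul_Icc {M : Type*} [AddCommGroup M] [Module.IsTorsionFree ℤ M] {y : M}
    (hy : y ≠ 0) (n : ℕ) :
    ((fun k : ℤ => k • y) '' Set.Icc (-(n : ℤ)) n).ncard = 2 * n + 1 := by
  rw [Set.ncard_image_of_injective _ (smul_left_injective ℤ hy), Set.ncard_eq_toFinset_card',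
    Set.toFinset_Icc, Int.card_Icc]
  omega

theorem lambda1_gt_of_few_short_vectors_general (p : ℝ) (hp : 1 ≤ p) (d m : ℕ)
    (B : Fin m → Fin d → ℝ) (hB : LinearIndependent ℝ B) (R : ℝ) (A : ℕ)
    (hcount : Nat.card {y : Fin d → ℝ // y ∈ latticeOf B ∧ lpNorm p y ≤ R} ≤ 2 * A + 1) :
    ∀ y ∈ latticeOf B, y ≠ 0 → R / ((A : ℝ) + 1) < lpNorm p y := by
  intro y hy hy0
  by_contra! hshort
  have hp0 : 0 < p := one_pos.trans_le hp
  have hmultiples : (fun k : ℤ => k • y) '' Set.Icc (-((A + 1 : ℕ) : ℤ)) (A + 1 : ℕ) ⊆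
      {z | z ∈ latticeOf B ∧ lpNorm p z ≤ R} := by
    rintro _ ⟨k, hk, rfl⟩
    have hk' : |(k : ℝ)| ≤ (A : ℝ) + 1 := by
      rw [← Int.cast_abs]
      exact_mod_cast abs_le.mpr hk
    refine ⟨zsmul_mem_latticeOf B hy k, ?_⟩
    calc lpNorm p (k • y) = |(k : ℝ)| * lpNorm p y := lpNorm_zsmul hp0 k y
      _ ≤ ((A : ℝ) + 1) * (R / ((A : ℝ) + 1)) :=
        mul_le_mul hk' hshort (lpNorm_nonneg p y) (by positivity)
      _ = R := mul_div_cancel₀ R (by positivity)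
  have hle := Set.ncard_le_ncard hmultiples (finite_setOf_mem_latticeOf_lpNorm_le hp0 hB R)
  rw [ncard_image_zsmul_Icc hy0, ← Nat.card_coe_set_eq] at hle
  exact absurd (hle.trans hcount) (by omega)

/-- Let `1 ≤ p < ∞`, let `L ⊂ ℝ^d` be a lattice, `R > 0`, and `A ≥ 0` an integer.
If the number of lattice vectors `y ∈ L` with `‖y‖_p ≤ R` (including `0`) is at most
`2A + 1`, then every nonzero lattice vector has ℓ_p norm strictly greater than
`R/(A+1)`, i.e., `λ₁^{(p)}(L) > R/(A+1)`. -/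
theorem lambda1_gt_of_few_short_vectors (p : ℝ) (hp : 1 ≤ p) (d m : ℕ)
    (B : Fin m → Fin d → ℝ) (hB : LinearIndependent ℝ B) (R : ℝ) (hR : 0 < R) (A : ℕ)
    (hcount : Nat.card {y : Fin d → ℝ // y ∈ latticeOf B ∧ lpNorm p y ≤ R} ≤ 2 * A + 1) :
    ∀ y ∈ latticeOf B, y ≠ 0 → R / ((A : ℝ) + 1) < lpNorm p y :=
  lambda1_gt_of_few_short_vectors_general p hp d m B hB R A hcount
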